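/- arXiv:2412.12461 — 6 statements merged into one kernel-verified Lean document; each statement's English description precedes it below -/
import Mathlib

section
/- Let q, p : ℤ × ℝ → ℂ be differentiable in t, and let f : ℤ × ℝ → ℂ be differentiable in t with f(n,t)² = 1 − q(n,t)p(n,t) and f(n,t) ≠ 0 for all n, t. Then the zero-curvature equation ∂L/∂t(n,t,z) = M(n+1,t,z)·L(n,t,z) − L(n,t,z)·M(n,t,z) holds for all n ∈ ℤ, t ∈ ℝ and all z ∈ ℂ \ {0} if and only if q and p satisfy the Ablowitz–Ladik system: i·q_t(n,t) + q(n+1,t) − 2q(n,t) + q(n−1,t) − p(n,t)q(n,t)(q(n+1,t) + q(n−1,t)) = 0 and i·p_t(n,t) − p(n+1,t) + 2p(n,t) − p(n−1,t) + p(n,t)q(n,t)(p(n+1,t) + p(n−1,t)) = 0 for all n, t. -/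
attribute [local instance] Matrix.normedAddCommGroup Matrix.normedSpace

/-- The Ablowitz–Ladik space-part Lax matrix
`L(n,t,z) = (1/f(n,t)) · [[z, q(n,t)], [p(n,t), z⁻¹]]`. -/
noncomputable def ALlaxL (q p f : ℤ × ℝ → ℂ) (n : ℤ) (t : ℝ) (z : ℂ) :
    Matrix (Fin 2) (Fin 2) ℂ :=
  (f (n, t))⁻¹ • !![z, q (n, t); p (n, t), z⁻¹]

/-- The Ablowitz–Ladik time-part Lax matrix
`M(n,t,z) = i·ω(z)·σ₃ + P(n,t,z)` with `ω(z) = (1/2)(z − z⁻¹)²`. -/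
noncomputable def ALlaxM (q p : ℤ × ℝ → ℂ) (n : ℤ) (t : ℝ) (z : ℂ) :
    Matrix (Fin 2) (Fin 2) ℂ :=
  (Complex.I * ((1/2) * (z - z⁻¹)^2)) • (!![1, 0; 0, -1] : Matrix (Fin 2) (Fin 2) ℂ) +
  Complex.I •
    !![-(1/2) * (q (n, t) * p (n - 1, t) + p (n, t) * q (n - 1, t)),
        z * q (n, t) - z⁻¹ * q (n - 1, t);
        z * p (n - 1, t) - z⁻¹ * p (n, t),
        (1/2) * (q (n, t) * p (n - 1, t) + p (n, t) * q (n - 1, t))]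

/-!
Write `L = f⁻¹ • N` with `N = [[z, q], [p, z⁻¹]]`. Then `∂ₜL = f⁻¹ • ([[0, qₜ], [pₜ, 0]] - (fₜ / f) • N)`,
while a direct computation gives `M(n+1) N - N M(n) = [[0, v_q], [v_p, 0]] - g • N`, where `v_q`, `v_p`
are the right-hand sides of the Ablowitz–Ladik system and `g` is a scalar. Both sides have the
shape `[[0, a], [b, 0]] - r • N`, whose coefficients are determined (the `(0,0)` entry is `-r z`
with `z ≠ 0`), so the zero-curvature equation says exactly `qₜ = v_q`, `pₜ = v_p` and `fₜ / f = g`.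
The last condition is a consequence of the first two: differentiating `f² = 1 - qp` gives
`2 f fₜ = -(qₜ p + q pₜ)`, and `v_q p + q v_p = -2 g (1 - qp)`.
-/

open Complex

lemma offDiag_sub_smul_eq_offDiag_sub_smul_iff {K : Type*} [Field K] {z x y a b a' b' r r' : K}
    (hz : z ≠ 0) :
    !![0, a; b, 0] - r • !![z, x; y, z⁻¹] = !![0, a'; b', 0] - r' • !![z, x; y, z⁻¹] ↔
      r = r' ∧ a = a' ∧ b = b' := by
  refine ⟨fun h => ?_, by rintro ⟨rfl, rfl, rfl⟩; rfl⟩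
  have h00 := congrFun₂ h 0 0
  have h01 := congrFun₂ h 0 1
  have h10 := congrFun₂ h 1 0
  simp only [Matrix.smul_of, Matrix.smul_cons, smul_eq_mul, Matrix.smul_empty, Matrix.sub_apply,
    Matrix.of_apply, Matrix.cons_val', Matrix.cons_val_zero, Matrix.cons_val_fin_one, zero_sub,
    neg_inj, mul_eq_mul_right_iff, Matrix.cons_val_one] at h00 h01 h10
  obtain rfl : r = r' := h00.resolve_right hz
  exact ⟨rfl, sub_left_inj.mp h01, sub_left_inj.mp h10⟩

lemma HasDerivAt.two_mul_mul_eq_of_sq_eq {𝕜 𝔸 : Type*} [NontriviallyNormedField 𝕜]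
    [NormedCommRing 𝔸] [NormedAlgebra 𝕜 𝔸] {f q p : 𝕜 → 𝔸} {f' q' p' : 𝔸} {t : 𝕜}
    (hf : HasDerivAt f f' t) (hq : HasDerivAt q q' t) (hp : HasDerivAt p p' t)
    (hf2 : ∀ s, f s ^ 2 = 1 - q s * p s) :
    2 * f t * f' = -(q' * p t + q t * p') := by
  have hsq : HasDerivAt (fun s => f s ^ 2) (f' * f t + f t * f') t := by
    simpa only [sq] using hf.fun_mul hf
  have hrhs : HasDerivAt (fun s => f s ^ 2) (0 - (q' * p t + q t * p')) t := by
    simpa only [hf2] using (hasDerivAt_const t (1 : 𝔸)).fun_sub (hq.fun_mul hp)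
  linear_combination hsq.unique hrhs

noncomputable def alVelocityQ (q p : ℤ × ℝ → ℂ) (n : ℤ) (t : ℝ) : ℂ :=
  I * (q (n + 1, t) - 2 * q (n, t) + q (n - 1, t)
    - p (n, t) * q (n, t) * (q (n + 1, t) + q (n - 1, t)))

noncomputable def alVelocityP (q p : ℤ × ℝ → ℂ) (n : ℤ) (t : ℝ) : ℂ :=
  -I * (p (n + 1, t) - 2 * p (n, t) + p (n - 1, t)
    - p (n, t) * q (n, t) * (p (n + 1, t) + p (n - 1, t)))

/-- The logarithmic derivative `f_t / f` forced by the Ablowitz–Ladik flow and `f² = 1 - qp`. -/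
noncomputable def alGauge (q p : ℤ × ℝ → ℂ) (n : ℤ) (t : ℝ) : ℂ :=
  I / 2 * (q (n, t) * (p (n + 1, t) + p (n - 1, t)) - p (n, t) * (q (n + 1, t) + q (n - 1, t)))

lemma al_system_iff_eq_alVelocity (q p : ℤ × ℝ → ℂ) (n : ℤ) (t : ℝ) (q' p' : ℂ) :
    (I * q' + q (n + 1, t) - 2 * q (n, t) + q (n - 1, t)
        - p (n, t) * q (n, t) * (q (n + 1, t) + q (n - 1, t)) = 0 ∧
      I * p' - p (n + 1, t) + 2 * p (n, t) - p (n - 1, t)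
        + p (n, t) * q (n, t) * (p (n + 1, t) + p (n - 1, t)) = 0) ↔
    q' = alVelocityQ q p n t ∧ p' = alVelocityP q p n t := by
  unfold alVelocityQ alVelocityP
  constructor
  · rintro ⟨hq, hp⟩
    exact ⟨by linear_combination -I * hq + q' * I_sq, by linear_combination -I * hp + p' * I_sq⟩
  · rintro ⟨rfl, rfl⟩
    constructor
    · linear_combination (q (n + 1, t) - 2 * q (n, t) + q (n - 1, t)
        - p (n, t) * q (n, t) * (q (n + 1, t) + q (n - 1, t))) * I_sq
    · linear_combination -(p (n + 1, t) - 2 * p (n, t) + p (n - 1, t)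
        - p (n, t) * q (n, t) * (p (n + 1, t) + p (n - 1, t))) * I_sq

lemma div_eq_alGauge {q p f : ℤ × ℝ → ℂ} {n : ℤ} {t : ℝ} {f' : ℂ}
    (hf2 : f (n, t) ^ 2 = 1 - q (n, t) * p (n, t)) (hfne : f (n, t) ≠ 0)
    (hft : 2 * f (n, t) * f' = -(alVelocityQ q p n t * p (n, t) + q (n, t) * alVelocityP q p n t)) :
    f' / f (n, t) = alGauge q p n t := by
  rw [div_eq_iff hfne]
  have h : f (n, t) * (f' - alGauge q p n t * f (n, t)) = 0 := by
    linear_combination (norm := (unfold alVelocityQ alVelocityP alGauge; ring1))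
      hft / 2 - alGauge q p n t * hf2
  linear_combination (mul_eq_zero.mp h).resolve_left hfne

lemma ALlaxM_succ_mul_sub_mul_ALlaxM (q p : ℤ × ℝ → ℂ) (n : ℤ) (t : ℝ) {z : ℂ} (hz : z ≠ 0) :
    ALlaxM q p (n + 1) t z * !![z, q (n, t); p (n, t), z⁻¹]
        - !![z, q (n, t); p (n, t), z⁻¹] * ALlaxM q p n t z =
      !![0, alVelocityQ q p n t; alVelocityP q p n t, 0]
        - alGauge q p n t • !![z, q (n, t); p (n, t), z⁻¹] := by
  ext i j
  fin_cases i <;> fin_cases j <;>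
    simp only [ALlaxM, alVelocityQ, alVelocityP, alGauge, Matrix.mul_apply, Fin.sum_univ_two,
      Matrix.sub_apply, Matrix.add_apply, Matrix.smul_apply, Matrix.of_apply, Matrix.cons_val',
      Matrix.cons_val_zero, Matrix.cons_val_one, Matrix.cons_val_fin_one, Fin.zero_eta, Fin.mk_one,
      add_sub_cancel_right, smul_eq_mul] <;>
    field_simp <;> ring

lemma hasDerivAt_ALlaxL {q p f : ℤ × ℝ → ℂ} {n : ℤ} {t : ℝ} (z : ℂ) {q' p' f' : ℂ}
    (hq : HasDerivAt (fun s => q (n, s)) q' t) (hp : HasDerivAt (fun s => p (n, s)) p' t)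
    (hf : HasDerivAt (fun s => f (n, s)) f' t) (hfne : f (n, t) ≠ 0) :
    HasDerivAt (fun s => ALlaxL q p f n s z)
      ((f (n, t))⁻¹ • (!![0, q'; p', 0] - (f' / f (n, t)) • !![z, q (n, t); p (n, t), z⁻¹])) t := by
  have hN : HasDerivAt (fun s => !![z, q (n, s); p (n, s), z⁻¹]) !![0, q'; p', 0] t := by
    refine hasDerivAt_pi.2 fun i => hasDerivAt_pi.2 fun j => ?_
    fin_cases i <;> fin_cases j
    · exact hasDerivAt_const t z
    · exact hq
    · exact hp
    · exact hasDerivAt_const t z⁻¹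
  refine ((hf.fun_inv hfne).fun_smul hN).congr_deriv ?_
  module

lemma hasDerivAt_ALlaxL_iff {q p f : ℤ × ℝ → ℂ} {n : ℤ} {t : ℝ} {z q' p' f' : ℂ} (hz : z ≠ 0)
    (hq : HasDerivAt (fun s => q (n, s)) q' t) (hp : HasDerivAt (fun s => p (n, s)) p' t)
    (hf : HasDerivAt (fun s => f (n, s)) f' t) (hfne : f (n, t) ≠ 0) :
    HasDerivAt (fun s => ALlaxL q p f n s z)
        (ALlaxM q p (n + 1) t z * ALlaxL q p f n t z - ALlaxL q p f n t z * ALlaxM q p n t z) t ↔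
      f' / f (n, t) = alGauge q p n t ∧ q' = alVelocityQ q p n t ∧ p' = alVelocityP q p n t := by
  have hL := hasDerivAt_ALlaxL z hq hp hf hfne
  have hcomm : ALlaxM q p (n + 1) t z * ALlaxL q p f n t z - ALlaxL q p f n t z * ALlaxM q p n t z
      = (f (n, t))⁻¹ • (!![0, alVelocityQ q p n t; alVelocityP q p n t, 0]
        - alGauge q p n t • !![z, q (n, t); p (n, t), z⁻¹]) := by
    rw [← ALlaxM_succ_mul_sub_mul_ALlaxM q p n t hz, smul_sub, ALlaxL, Matrix.mul_smul,
      Matrix.smul_mul]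
  rw [hcomm, ← offDiag_sub_smul_eq_offDiag_sub_smul_iff hz,
    ← (smul_right_injective _ (inv_ne_zero hfne)).eq_iff]
  exact ⟨fun h => hL.unique h, fun h => h ▸ hL⟩

theorem al_zero_curvature_iff_AL_system
    (q p f qt pt ft : ℤ × ℝ → ℂ)
    (hq : ∀ (n : ℤ) (t : ℝ), HasDerivAt (fun s => q (n, s)) (qt (n, t)) t)
    (hp : ∀ (n : ℤ) (t : ℝ), HasDerivAt (fun s => p (n, s)) (pt (n, t)) t)
    (hf : ∀ (n : ℤ) (t : ℝ), HasDerivAt (fun s => f (n, s)) (ft (n, t)) t)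
    (hf2 : ∀ (n : ℤ) (t : ℝ), (f (n, t))^2 = 1 - q (n, t) * p (n, t))
    (hfne : ∀ (n : ℤ) (t : ℝ), f (n, t) ≠ 0) :
    (∀ (n : ℤ) (t : ℝ) (z : ℂ), z ≠ 0 →
      HasDerivAt (fun s => ALlaxL q p f n s z)
        (ALlaxM q p (n + 1) t z * ALlaxL q p f n t z
          - ALlaxL q p f n t z * ALlaxM q p n t z) t)
    ↔
    (∀ (n : ℤ) (t : ℝ),
      Complex.I * qt (n, t) + q (n + 1, t) - 2 * q (n, t) + q (n - 1, t)
        - p (n, t) * q (n, t) * (q (n + 1, t) + q (n - 1, t)) = 0 ∧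
      Complex.I * pt (n, t) - p (n + 1, t) + 2 * p (n, t) - p (n - 1, t)
        + p (n, t) * q (n, t) * (p (n + 1, t) + p (n - 1, t)) = 0) := by
  have hzc n t {z : ℂ} (hz : z ≠ 0) := hasDerivAt_ALlaxL_iff hz (hq n t) (hp n t) (hf n t) (hfne n t)
  simp only [al_system_iff_eq_alVelocity]
  refine ⟨fun H n t => ((hzc n t one_ne_zero).1 (H n t 1 one_ne_zero)).2, ?_⟩
  rintro H n t z hz
  obtain ⟨hqt, hpt⟩ := H n t
  have hft := (hf n t).two_mul_mul_eq_of_sq_eq (hq n t) (hp n t) (hf2 n)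
  rw [hqt, hpt] at hft
  exact (hzc n t hz).2 ⟨div_eq_alGauge (hf2 n t) (hfne n t) hft, hqt, hpt⟩
end

section
/- Let ν ∈ {1, −1}, n₀ ∈ ℤ, q : ℤ → ℂ, and set p(n) = ν·conj(q(n₀ − n)) (the space shifted nonlocal reduction). Let f : ℤ → ℂ satisfy f(n)² = 1 − q(n)p(n), f(n) ≠ 0, and conj(f(n₀ − n)) = f(n) for all n, and let z ∈ ℂ \ {0}. Then L(n,z) · σ̃_ν · conj(L(n₀ − n, conj(z))) = σ̃_ν for all n ∈ ℤ, where conj denotes entrywise complex conjugation. Consequently, if Ψ : ℤ → ℂ² satisfies Ψ(n+1) = L(n, conj(z))·Ψ(n) for all n, then Φ(n) := σ̃_ν · conj(Ψ(n₀ − n + 1)) satisfies Φ(n+1) = L(n,z)·Φ(n) for all n. -/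
/- STATEMENT 5: Symmetry of the Ablowitz–Ladik Lax matrix under the space
shifted nonlocal reduction `p(n) = ν·conj(q(n₀ − n))`:
`L(n,z) · σ̃_ν · conj(L(n₀ − n, conj z)) = σ̃_ν`, and the induced symmetry of
solutions of the discrete linear problem. -/

open Matrix

/-- The Ablowitz–Ladik Lax matrix `L(n,z) = (1/f(n)) · [[z, q(n)], [p(n), z⁻¹]]`. -/
noncomputable def ALlax (q p f : ℤ → ℂ) (z : ℂ) (n : ℤ) :
    Matrix (Fin 2) (Fin 2) ℂ :=
  (f n)⁻¹ • !![z, q n; p n, z⁻¹]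

/-- The matrix `σ̃_ν = [[0,1],[−ν,0]]`. -/
def sigmaTildeNu (ν : ℂ) : Matrix (Fin 2) (Fin 2) ℂ := !![0, 1; -ν, 0]

/-! Under the reduction, conjugating the reflected Lax matrix `L(n₀ − n, z̄)` gives
`f(n)⁻¹ · [[z, ν p(n)], [ν q(n), z⁻¹]]`, so the symmetry of `L` is a `2 × 2` computation using
`ν² = 1`, `z z⁻¹ = 1` and `f² = 1 − q p`. Conjugating the linear problem for `Ψ` at `n₀ − n` and
cancelling with this symmetry shows that `Φ` solves the linear problem for `L(·, z)`. -/

open ComplexConjugate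

theorem mulVec_map_reflect_succ_eq {m R : Type*} [Fintype m] [Semiring R]
    (φ : R →+* R) {L M : ℤ → Matrix m m R} {S : Matrix m m R} {n₀ : ℤ}
    (hLM : ∀ n, L n * S * (M (n₀ - n)).map φ = S)
    {Ψ : ℤ → m → R} (hΨ : ∀ n, Ψ (n + 1) = M n *ᵥ Ψ n) (n : ℤ) :
    S *ᵥ (φ ∘ Ψ (n₀ - (n + 1) + 1)) = L n *ᵥ (S *ᵥ (φ ∘ Ψ (n₀ - n + 1))) := by
  have hΨφ : φ ∘ Ψ (n₀ - n + 1) = (M (n₀ - n)).map φ *ᵥ (φ ∘ Ψ (n₀ - n)) := by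
    funext i
    rw [Function.comp_apply, hΨ, RingHom.map_mulVec]
  rw [show n₀ - (n + 1) + 1 = n₀ - n by ring, hΨφ, mulVec_mulVec, mulVec_mulVec, hLM]

theorem smul_mul_sigmaTildeNu_mul_smul {ν q p f z : ℂ} (hν : ν * ν = 1)
    (hf : f ^ 2 = 1 - q * p) (hf0 : f ≠ 0) (hz : z ≠ 0) :
    f⁻¹ • !![z, q; p, z⁻¹] * sigmaTildeNu ν * (f⁻¹ • !![z, ν * p; ν * q, z⁻¹])
      = sigmaTildeNu ν := by
  have hzz : z * z⁻¹ = 1 := mul_inv_cancel₀ hz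
  have hprod : !![z, q; p, z⁻¹] * sigmaTildeNu ν * !![z, ν * p; ν * q, z⁻¹]
      = f ^ 2 • sigmaTildeNu ν := by
    simp only [sigmaTildeNu, mul_fin_two, smul_of, smul_cons, smul_empty, smul_eq_mul,
      EmbeddingLike.apply_eq_iff_eq, vecCons_inj, and_true]
    refine ⟨⟨?_, ?_⟩, ?_, ?_⟩
    · ring
    · linear_combination hzz - (q * p) * hν - hf
    · linear_combination (-ν) * hzz + ν * hf
    · linear_combination (-p * z⁻¹) * hν
  rw [smul_mul_assoc, smul_mul_assoc, mul_smul_comm, hprod, smul_smul, smul_smul, ← sq,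
    inv_pow, inv_mul_cancel₀ (pow_ne_zero 2 hf0), one_smul]

theorem map_conj_ALlax_reflect {ν : ℂ} (hν : ν * ν = 1) (hνc : conj ν = ν) {n₀ : ℤ}
    {q p f : ℤ → ℂ} (hp : ∀ n, p n = ν * conj (q (n₀ - n)))
    (hfsym : ∀ n, conj (f (n₀ - n)) = f n) (z : ℂ) (n : ℤ) :
    (ALlax q p f (conj z) (n₀ - n)).map conj = (f n)⁻¹ • !![z, ν * p n; ν * q n, z⁻¹] := by
  have hq : conj (q (n₀ - n)) = ν * p n := by rw [hp, ← mul_assoc, hν, one_mul]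
  have hpc : conj (p (n₀ - n)) = ν * q n := by
    rw [hp, map_mul, hνc, sub_sub_cancel, Complex.conj_conj]
  ext i j
  fin_cases i <;> fin_cases j <;> simp [ALlax, hq, hpc, hfsym]

theorem al_space_shifted_reduction_symmetry (ν : ℂ) (hν : ν = 1 ∨ ν = -1) (n₀ : ℤ)
    (q : ℤ → ℂ) (p : ℤ → ℂ) (hp : ∀ n : ℤ, p n = ν * (starRingEnd ℂ) (q (n₀ - n)))
    (f : ℤ → ℂ)
    (hf2 : ∀ n : ℤ, (f n)^2 = 1 - q n * p n)
    (hfne : ∀ n : ℤ, f n ≠ 0)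
    (hfsym : ∀ n : ℤ, (starRingEnd ℂ) (f (n₀ - n)) = f n)
    (z : ℂ) (hz : z ≠ 0) :
    (∀ n : ℤ,
      ALlax q p f z n * sigmaTildeNu ν
          * (ALlax q p f ((starRingEnd ℂ) z) (n₀ - n)).map (starRingEnd ℂ)
        = sigmaTildeNu ν) ∧
    (∀ Ψ : ℤ → Fin 2 → ℂ,
      (∀ n : ℤ, Ψ (n + 1) = ALlax q p f ((starRingEnd ℂ) z) n *ᵥ Ψ n) →
      (∀ n : ℤ,
        (sigmaTildeNu ν *ᵥ fun i => (starRingEnd ℂ) (Ψ (n₀ - (n + 1) + 1) i))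
          = ALlax q p f z n *ᵥ (sigmaTildeNu ν *ᵥ fun i => (starRingEnd ℂ) (Ψ (n₀ - n + 1) i)))) := by
  have hνν : ν * ν = 1 := by rcases hν with rfl | rfl <;> norm_num
  have hνc : conj ν = ν := by rcases hν with rfl | rfl <;> simp
  have hLax : ∀ n, ALlax q p f z n * sigmaTildeNu ν
      * (ALlax q p f (conj z) (n₀ - n)).map conj = sigmaTildeNu ν := fun n => by
    rw [map_conj_ALlax_reflect hνν hνc hp hfsym]
    exact smul_mul_sigmaTildeNu_mul_smul hνν (hf2 n) (hfne n) hz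
  exact ⟨hLax, fun Ψ hΨ => mulVec_map_reflect_succ_eq (starRingEnd ℂ) hLax hΨ⟩
end

section
/- Let ν ∈ {1, −1}, t₀ ∈ ℝ, q, p : ℤ × ℝ → ℂ with p(n,t) = ν·q(n, t₀ − t) (the time shifted nonlocal reduction), and let f : ℤ × ℝ → ℂ satisfy f(n,t)² = 1 − q(n,t)p(n,t), f(n,t) ≠ 0, and f(n, t₀ − t) = f(n,t) for all n, t. Then for every z ∈ ℂ \ {0}: σ_ν · L(n, t₀ − t, 1/z) = L(n, t, z) · σ_ν for all n ∈ ℤ and t ∈ ℝ. Consequently, if Ψ : ℤ → ℂ² satisfies Ψ(n+1) = L(n, t₀ − t, 1/z)·Ψ(n) for all n, then Φ(n) := σ_ν · Ψ(n) satisfies Φ(n+1) = L(n, t, z)·Φ(n) for all n. -/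
/-!
Conjugating by `σ_ν` swaps both the rows and the columns of a `2 × 2` matrix, exchanging `z` with
`z⁻¹` on the diagonal and `q` with `p` off it (up to the factor `ν`). The symmetry of the Lax
matrix thus reduces entrywise to `p(n, t₀ - t) = ν q(n, t)` and `ν q(n, t₀ - t) = p(n, t)`, two
instances of the reduction, and to `f(n, t₀ - t) = f(n, t)` for the scalar prefactor.
-/

open Matrix

/-- The Ablowitz–Ladik Lax matrix
`L(n,t,z) = (1/f(n,t)) · [[z, q(n,t)], [p(n,t), z⁻¹]]`. -/
noncomputable def ALlaxT (q p f : ℤ × ℝ → ℂ) (t : ℝ) (z : ℂ) (n : ℤ) :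
    Matrix (Fin 2) (Fin 2) ℂ :=
  (f (n, t))⁻¹ • !![z, q (n, t); p (n, t), z⁻¹]

/-- The matrix `σ_ν = [[0,1],[ν,0]]`. -/
def sigmaNu (ν : ℂ) : Matrix (Fin 2) (Fin 2) ℂ := !![0, 1; ν, 0]

theorem Matrix.mulVec_eq_mulVec_mulVec_of_mul_eq {m n R : Type*} [Fintype m] [Fintype n]
    [CommSemiring R] {S : Matrix m n R} {A : Matrix n n R} {B : Matrix m m R} {ψ ψ' : n → R}
    (hSAB : S * A = B * S) (hψ : ψ' = A *ᵥ ψ) : S *ᵥ ψ' = B *ᵥ (S *ᵥ ψ) := by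
  rw [hψ, mulVec_mulVec, mulVec_mulVec, hSAB]

theorem sigmaNu_mul_of (ν a b c d : ℂ) :
    sigmaNu ν * !![a, b; c, d] = !![c, d; ν * a, ν * b] := by
  simp [sigmaNu]

theorem of_mul_sigmaNu (ν a b c d : ℂ) :
    !![a, b; c, d] * sigmaNu ν = !![ν * b, a; ν * d, c] := by
  simp [sigmaNu, mul_comm]

theorem sigmaNu_mul_ALlaxT_time_reflect {ν : ℂ} {t₀ : ℝ} {q p f : ℤ × ℝ → ℂ}
    (hp : ∀ (n : ℤ) (t : ℝ), p (n, t) = ν * q (n, t₀ - t))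
    (hfsym : ∀ (n : ℤ) (t : ℝ), f (n, t₀ - t) = f (n, t)) (z : ℂ) (n : ℤ) (t : ℝ) :
    sigmaNu ν * ALlaxT q p f (t₀ - t) z⁻¹ n = ALlaxT q p f t z n * sigmaNu ν := by
  have hp_reflect : p (n, t₀ - t) = ν * q (n, t) := by rw [hp, sub_sub_cancel]
  rw [ALlaxT, ALlaxT, hfsym, Matrix.mul_smul, Matrix.smul_mul, sigmaNu_mul_of, of_mul_sigmaNu,
    hp_reflect, inv_inv, ← hp n t]

theorem al_time_shifted_reduction_symmetry_general (ν : ℂ) (t₀ : ℝ)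
    (q p : ℤ × ℝ → ℂ) (hp : ∀ (n : ℤ) (t : ℝ), p (n, t) = ν * q (n, t₀ - t))
    (f : ℤ × ℝ → ℂ)
    (hfsym : ∀ (n : ℤ) (t : ℝ), f (n, t₀ - t) = f (n, t))
    (z : ℂ) :
    (∀ (n : ℤ) (t : ℝ),
      sigmaNu ν * ALlaxT q p f (t₀ - t) z⁻¹ n = ALlaxT q p f t z n * sigmaNu ν) ∧
    (∀ (t : ℝ) (Ψ : ℤ → Fin 2 → ℂ),
      (∀ n : ℤ, Ψ (n + 1) = ALlaxT q p f (t₀ - t) z⁻¹ n *ᵥ Ψ n) →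
      (∀ n : ℤ,
        sigmaNu ν *ᵥ Ψ (n + 1) = ALlaxT q p f t z n *ᵥ (sigmaNu ν *ᵥ Ψ n))) :=
  ⟨sigmaNu_mul_ALlaxT_time_reflect hp hfsym z, fun t _ hΨ n =>
    mulVec_eq_mulVec_mulVec_of_mul_eq (sigmaNu_mul_ALlaxT_time_reflect hp hfsym z n t) (hΨ n)⟩

theorem al_time_shifted_reduction_symmetry (ν : ℂ) (hν : ν = 1 ∨ ν = -1) (t₀ : ℝ)
    (q p : ℤ × ℝ → ℂ) (hp : ∀ (n : ℤ) (t : ℝ), p (n, t) = ν * q (n, t₀ - t))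
    (f : ℤ × ℝ → ℂ)
    (hf2 : ∀ (n : ℤ) (t : ℝ), (f (n, t))^2 = 1 - q (n, t) * p (n, t))
    (hfne : ∀ (n : ℤ) (t : ℝ), f (n, t) ≠ 0)
    (hfsym : ∀ (n : ℤ) (t : ℝ), f (n, t₀ - t) = f (n, t))
    (z : ℂ) (hz : z ≠ 0) :
    (∀ (n : ℤ) (t : ℝ),
      sigmaNu ν * ALlaxT q p f (t₀ - t) z⁻¹ n = ALlaxT q p f t z n * sigmaNu ν) ∧
    (∀ (t : ℝ) (Ψ : ℤ → Fin 2 → ℂ),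
      (∀ n : ℤ, Ψ (n + 1) = ALlaxT q p f (t₀ - t) z⁻¹ n *ᵥ Ψ n) →
      (∀ n : ℤ,
        sigmaNu ν *ᵥ Ψ (n + 1) = ALlaxT q p f t z n *ᵥ (sigmaNu ν *ᵥ Ψ n))) :=
  al_time_shifted_reduction_symmetry_general ν t₀ q p hp f hfsym z
end

section
/- Let ν ∈ {1, −1}, n₀ ∈ ℤ, t₀ ∈ ℝ, q, p : ℤ × ℝ → ℂ with p(n,t) = ν·q(n₀ − n, t₀ − t) (the space-time shifted nonlocal reduction), and let f : ℤ × ℝ → ℂ satisfy f(n,t)² = 1 − q(n,t)p(n,t), f(n,t) ≠ 0, and f(n₀ − n, t₀ − t) = f(n,t) for all n, t. Then for every z ∈ ℂ \ {0}: L(n, t, z) · σ̃_ν · L(n₀ − n, t₀ − t, z) = σ̃_ν for all n ∈ ℤ and t ∈ ℝ. Consequently, if Ψ : ℤ → ℂ² satisfies Ψ(n+1) = L(n, t₀ − t, z)·Ψ(n) for all n, then Φ(n) := σ̃_ν · Ψ(n₀ − n + 1) satisfies Φ(n+1) = L(n, t, z)·Φ(n) for all n. -/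
/-!
Write `L(n,t)` for `[[z, q], [p, z⁻¹]]` at `(n,t)` and `L'` for the same matrix at the reflected
point `(n₀ - n, t₀ - t)`. The reduction makes the off-diagonal entries of `L'` those of `L`,
exchanged and multiplied by `ν`, so a direct computation gives
`L σ̃_ν L' = (1 - q p) σ̃_ν = f² σ̃_ν`, and the scalars `1/f` in front of `L` and `L'` cancel this
factor. The symmetry of the linear problem follows by inserting `Ψ(n₀ - n + 1) = L' Ψ(n₀ - n)`.
-/

open Matrix

theorem laxBlock_mul_sigma_mul_laxBlock_swap {K : Type*} [Field K] {z : K} (hz : z ≠ 0)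
    (ν a b : K) :
    !![z, a; ν * b, z⁻¹] * !![0, 1; -ν, 0] * !![z, b; ν * a, z⁻¹]
      = (1 - a * (ν * b)) • !![0, 1; -ν, 0] := by
  ext i j
  fin_cases i <;> fin_cases j <;> simp [Matrix.mul_apply, Fin.sum_univ_two] <;> field_simp <;> ring

theorem ALlaxT_mul_sigmaTildeNu_mul_ALlaxT_reflect {ν : ℂ} {n₀ : ℤ} {t₀ : ℝ}
    {q p f : ℤ × ℝ → ℂ} (hp : ∀ (n : ℤ) (t : ℝ), p (n, t) = ν * q (n₀ - n, t₀ - t))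
    (hf2 : ∀ (n : ℤ) (t : ℝ), (f (n, t))^2 = 1 - q (n, t) * p (n, t))
    (hfne : ∀ (n : ℤ) (t : ℝ), f (n, t) ≠ 0)
    (hfsym : ∀ (n : ℤ) (t : ℝ), f (n₀ - n, t₀ - t) = f (n, t))
    {z : ℂ} (hz : z ≠ 0) (n : ℤ) (t : ℝ) :
    ALlaxT q p f t z n * sigmaTildeNu ν * ALlaxT q p f (t₀ - t) z (n₀ - n) = sigmaTildeNu ν := by
  have hp_reflect : p (n₀ - n, t₀ - t) = ν * q (n, t) := by
    rw [hp, sub_sub_cancel, sub_sub_cancel]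
  calc ALlaxT q p f t z n * sigmaTildeNu ν * ALlaxT q p f (t₀ - t) z (n₀ - n)
      = ((f (n, t))⁻¹ * (f (n, t))⁻¹ * (1 - q (n, t) * p (n, t))) • sigmaTildeNu ν := by
        rw [ALlaxT, ALlaxT, hfsym, hp_reflect, hp, smul_mul_assoc, mul_smul_comm, smul_mul_assoc,
          sigmaTildeNu, laxBlock_mul_sigma_mul_laxBlock_swap hz, smul_smul, smul_smul, ← hp,
          mul_assoc]
    _ = sigmaTildeNu ν := by
        rw [← hf2, ← mul_inv, ← sq, inv_mul_cancel₀ (pow_ne_zero 2 (hfne n t)), one_smul]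

theorem mulVec_reflect_of_mul_mul_reflect_eq {m R : Type*} [Fintype m] [NonUnitalSemiring R]
    {L M : ℤ → Matrix m m R} {S : Matrix m m R} {n₀ : ℤ}
    (hLM : ∀ n, L n * S * M (n₀ - n) = S) {Ψ : ℤ → m → R}
    (hΨ : ∀ n, Ψ (n + 1) = M n *ᵥ Ψ n) (n : ℤ) :
    S *ᵥ Ψ (n₀ - (n + 1) + 1) = L n *ᵥ (S *ᵥ Ψ (n₀ - n + 1)) := by
  rw [show n₀ - (n + 1) + 1 = n₀ - n by ring, hΨ, mulVec_mulVec, mulVec_mulVec, hLM]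

theorem al_spacetime_shifted_reduction_symmetry_general (ν : ℂ)
    (n₀ : ℤ) (t₀ : ℝ)
    (q p : ℤ × ℝ → ℂ) (hp : ∀ (n : ℤ) (t : ℝ), p (n, t) = ν * q (n₀ - n, t₀ - t))
    (f : ℤ × ℝ → ℂ)
    (hf2 : ∀ (n : ℤ) (t : ℝ), (f (n, t))^2 = 1 - q (n, t) * p (n, t))
    (hfne : ∀ (n : ℤ) (t : ℝ), f (n, t) ≠ 0)
    (hfsym : ∀ (n : ℤ) (t : ℝ), f (n₀ - n, t₀ - t) = f (n, t))
    (z : ℂ) (hz : z ≠ 0) :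
    (∀ (n : ℤ) (t : ℝ),
      ALlaxT q p f t z n * sigmaTildeNu ν * ALlaxT q p f (t₀ - t) z (n₀ - n)
        = sigmaTildeNu ν) ∧
    (∀ (t : ℝ) (Ψ : ℤ → Fin 2 → ℂ),
      (∀ n : ℤ, Ψ (n + 1) = ALlaxT q p f (t₀ - t) z n *ᵥ Ψ n) →
      (∀ n : ℤ,
        sigmaTildeNu ν *ᵥ Ψ (n₀ - (n + 1) + 1)
          = ALlaxT q p f t z n *ᵥ (sigmaTildeNu ν *ᵥ Ψ (n₀ - n + 1)))) := by
  have symmetry := ALlaxT_mul_sigmaTildeNu_mul_ALlaxT_reflect hp hf2 hfne hfsym hz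
  exact ⟨symmetry, fun t _ hΨ ↦ mulVec_reflect_of_mul_mul_reflect_eq (symmetry · t) hΨ⟩

theorem al_spacetime_shifted_reduction_symmetry (ν : ℂ) (hν : ν = 1 ∨ ν = -1)
    (n₀ : ℤ) (t₀ : ℝ)
    (q p : ℤ × ℝ → ℂ) (hp : ∀ (n : ℤ) (t : ℝ), p (n, t) = ν * q (n₀ - n, t₀ - t))
    (f : ℤ × ℝ → ℂ)
    (hf2 : ∀ (n : ℤ) (t : ℝ), (f (n, t))^2 = 1 - q (n, t) * p (n, t))
    (hfne : ∀ (n : ℤ) (t : ℝ), f (n, t) ≠ 0)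
    (hfsym : ∀ (n : ℤ) (t : ℝ), f (n₀ - n, t₀ - t) = f (n, t))
    (z : ℂ) (hz : z ≠ 0) :
    (∀ (n : ℤ) (t : ℝ),
      ALlaxT q p f t z n * sigmaTildeNu ν * ALlaxT q p f (t₀ - t) z (n₀ - n)
        = sigmaTildeNu ν) ∧
    (∀ (t : ℝ) (Ψ : ℤ → Fin 2 → ℂ),
      (∀ n : ℤ, Ψ (n + 1) = ALlaxT q p f (t₀ - t) z n *ᵥ Ψ n) →
      (∀ n : ℤ,
        sigmaTildeNu ν *ᵥ Ψ (n₀ - (n + 1) + 1)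
          = ALlaxT q p f t z n *ᵥ (sigmaTildeNu ν *ᵥ Ψ (n₀ - n + 1)))) :=
  al_spacetime_shifted_reduction_symmetry_general ν n₀ t₀ q p hp f hf2 hfne hfsym z hz
end

section
/- Let h : ℂ → ℂ be continuous on the set {z : |z| ≥ 1}, holomorphic on {z : |z| > 1}, satisfy h(−z) = h(z) for all |z| ≥ 1, and h(z) → 0 as |z| → ∞. Then for every z ∈ ℂ with |z| > 1, (1/(2πi))·∮_{|ξ|=1} ξ·h(ξ)/(ξ² − z²) dξ = −h(z), and for every z with |z| < 1, (1/(2πi))·∮_{|ξ|=1} ξ·h(ξ)/(ξ² − z²) dξ = 0, where the contour integral is over the positively oriented unit circle. -/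
/-!
Since `ξ / (ξ² - z²) = ½ (1 / (ξ - z) + 1 / (ξ + z))`, it suffices to compute the Cauchy
integrals `∮_{|ξ| = r} f(ξ) / (ξ - w) dξ` of a function `f` continuous on `|ξ| ≥ r`, holomorphic
on `|ξ| > r` and vanishing at infinity. On the circles `|ξ| = R` these integrals are `O(sup |f|)`,
hence tend to `0` as `R → ∞`. Cauchy's theorem (for `|w| < r`) or Cauchy's formula (for `|w| > r`)
on the annulus `r ≤ |ξ| ≤ R` then gives `0`, respectively `-2πi f(w)`. For `|z| > 1` the
evenness of `h` makes the contributions of `w = z` and `w = -z` equal.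
-/

open Complex Metric Set Filter Bornology Topology
open scoped Real

variable {E : Type*} [NormedAddCommGroup E] [NormedSpace ℂ E]

theorem circleIntegrable_sub_inv_smul {f : ℂ → E} {c w : ℂ} {R : ℝ} (hR : 0 ≤ R)
    (hw : w ∉ sphere c R) (hf : ContinuousOn f (sphere c R)) :
    CircleIntegrable (fun z ↦ (z - w)⁻¹ • f z) c R :=
  (((continuousOn_id.sub continuousOn_const).inv₀ fun _ hz ↦
    sub_ne_zero.2 (ne_of_mem_of_not_mem hz hw)).smul hf).circleIntegrable hR

theorem circleIntegral_sub_inv_of_notMem_closedBall {c w : ℂ} {R : ℝ} (hR : 0 ≤ R)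
    (hw : w ∉ closedBall c R) : (∮ z in C(c, R), (z - w)⁻¹) = 0 := by
  have hne : ∀ z ∈ closedBall c R, z - w ≠ 0 := fun _ hz ↦
    sub_ne_zero.2 (ne_of_mem_of_not_mem hz hw)
  exact Complex.circleIntegral_eq_zero_of_differentiable_on_off_countable hR countable_empty
    ((continuousOn_id.sub continuousOn_const).inv₀ hne)
    fun z hz ↦ ((differentiableAt_id.sub_const w).inv (hne z (ball_subset_closedBall hz.1)))

theorem circleIntegral_dslope [CompleteSpace E] {f : ℂ → E} {c w : ℂ} {R : ℝ} (hR : 0 ≤ R)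
    (hw : w ∉ sphere c R) (hf : ContinuousOn f (sphere c R)) :
    (∮ z in C(c, R), dslope f w z) =
      (∮ z in C(c, R), (z - w)⁻¹ • f z) - (∮ z in C(c, R), (z - w)⁻¹) • f w := by
  rw [← circleIntegral.integral_smul_const, ← circleIntegral.integral_sub
    (circleIntegrable_sub_inv_smul hR hw hf)
    (circleIntegrable_sub_inv_smul hR hw continuousOn_const)]
  refine circleIntegral.integral_congr hR fun z hz ↦ ?_
  rw [dslope_of_ne f (ne_of_mem_of_not_mem hz hw), slope_def_module, smul_sub]

theorem circleIntegral_sub_inv_smul_sub_of_differentiable_on_annulus [CompleteSpace E]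
    {f : ℂ → E} {c w : ℂ} {r R : ℝ} (hr : 0 < r) (hw : w ∈ ball c R \ closedBall c r)
    (hc : ContinuousOn f (closedBall c R \ ball c r))
    (hd : ∀ z ∈ ball c R \ closedBall c r, DifferentiableAt ℂ f z) :
    (∮ z in C(c, R), (z - w)⁻¹ • f z) - (∮ z in C(c, r), (z - w)⁻¹ • f z) =
      (2 * π * I : ℂ) • f w := by
  have hrR : r ≤ R := (lt_of_not_ge (hw.2 ·)).le.trans (mem_ball.1 hw.1).le
  have hw_nhds : closedBall c R \ ball c r ∈ 𝓝 w :=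
    mem_of_superset ((isOpen_ball.sdiff isClosed_closedBall).mem_nhds hw)
      (sdiff_subset_sdiff ball_subset_closedBall ball_subset_closedBall)
  -- `dslope f w` has no pole at `w`, so Cauchy's theorem applies to it on the whole annulus.
  have hdslope : (∮ z in C(c, R), dslope f w z) = ∮ z in C(c, r), dslope f w z :=
    circleIntegral_eq_of_differentiable_on_annulus_off_countable hr hrR (countable_singleton w)
      ((continuousOn_dslope hw_nhds).2 ⟨hc, hd w hw⟩)
      fun z hz ↦ (differentiableAt_dslope_of_ne hz.2).2 (hd z hz.1)
  have hwR : w ∉ sphere c R := fun h ↦ (mem_ball.1 hw.1).ne (mem_sphere.1 h)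
  have hwr : w ∉ sphere c r := fun h ↦ hw.2 (sphere_subset_closedBall h)
  rw [circleIntegral_dslope (hr.le.trans hrR) hwR (hc.mono ?_),
    circleIntegral_dslope hr.le hwr (hc.mono ?_), circleIntegral.integral_sub_inv_of_mem_ball hw.1,
    circleIntegral_sub_inv_of_notMem_closedBall hr.le hw.2, zero_smul, sub_zero] at hdslope
  · rw [← hdslope, sub_sub_cancel]
  · exact fun z hz ↦ ⟨closedBall_subset_closedBall hrR (sphere_subset_closedBall hz),
      fun hzr ↦ (mem_ball.1 hzr).ne (mem_sphere.1 hz)⟩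
  · exact fun z hz ↦ ⟨sphere_subset_closedBall hz,
      fun hzr ↦ (mem_ball.1 hzr).not_ge ((mem_sphere.1 hz).symm ▸ hrR)⟩

theorem norm_circleIntegral_sub_inv_smul_le {f : ℂ → E} {c w : ℂ} {R C : ℝ} (hR : 0 < R)
    (hwR : 2 * ‖w - c‖ ≤ R) (hf : ∀ z ∈ sphere c R, ‖f z‖ ≤ C) :
    ‖∮ z in C(c, R), (z - w)⁻¹ • f z‖ ≤ 4 * π * C := by
  have hbound : ∀ z ∈ sphere c R, ‖(z - w)⁻¹ • f z‖ ≤ 2 / R * C := by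
    intro z hz
    have hzw : R / 2 ≤ ‖z - w‖ := by
      have := norm_sub_norm_le (z - c) (w - c)
      rw [sub_sub_sub_cancel_right, ← dist_eq_norm, mem_sphere.1 hz] at this
      linarith
    rw [norm_smul, norm_inv]
    refine mul_le_mul ?_ (hf z hz) (norm_nonneg _) (by positivity)
    calc ‖z - w‖⁻¹ ≤ (R / 2)⁻¹ := inv_anti₀ (by positivity) hzw
      _ = 2 / R := inv_div R 2
  calc ‖∮ z in C(c, R), (z - w)⁻¹ • f z‖ ≤ 2 * π * R * (2 / R * C) :=
        circleIntegral.norm_integral_le_of_norm_le_const hR.le hbound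
    _ = 4 * π * C := by field_simp; ring

theorem tendsto_circleIntegral_sub_inv_smul_atTop {f : ℂ → E}
    (hf : Tendsto f (cobounded ℂ) (𝓝 0)) (c w : ℂ) :
    Tendsto (fun R : ℝ ↦ ∮ z in C(c, R), (z - w)⁻¹ • f z) atTop (𝓝 0) := by
  rw [NormedAddGroup.tendsto_nhds_zero]
  intro ε hε
  obtain ⟨M, -, hM⟩ := (hasBasis_cobounded_compl_closedBall c).eventually_iff.1 <|
    (NormedAddGroup.tendsto_nhds_zero.1 hf) (ε / (8 * π)) (by positivity)
  filter_upwards [eventually_gt_atTop M, eventually_gt_atTop 0,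
    eventually_ge_atTop (2 * ‖w - c‖)] with R hRM hR hwR
  calc ‖∮ z in C(c, R), (z - w)⁻¹ • f z‖ ≤ 4 * π * (ε / (8 * π)) :=
        norm_circleIntegral_sub_inv_smul_le hR hwR fun z hz ↦
          (hM fun hzM ↦ hRM.not_ge ((mem_sphere.1 hz) ▸ mem_closedBall.1 hzM)).le
    _ < ε := by field_simp; linarith

section Exterior

variable {f : ℂ → E} {c w : ℂ} {r : ℝ}

theorem DifferentiableOn.differentiableAt_of_notMem_closedBall
    (hd : DifferentiableOn ℂ f (closedBall c r)ᶜ) {z : ℂ} (hz : z ∉ closedBall c r) :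
    DifferentiableAt ℂ f z :=
  hd.differentiableAt (isClosed_closedBall.isOpen_compl.mem_nhds hz)

theorem circleIntegral_sub_inv_smul_eq_zero_of_tendsto_cobounded (hr : 0 < r)
    (hw : w ∈ ball c r) (hc : ContinuousOn f (ball c r)ᶜ)
    (hd : DifferentiableOn ℂ f (closedBall c r)ᶜ) (hf : Tendsto f (cobounded ℂ) (𝓝 0)) :
    (∮ z in C(c, r), (z - w)⁻¹ • f z) = 0 := by
  have hne : ∀ z ∈ (ball c r)ᶜ, z - w ≠ 0 := fun z hz ↦
    sub_ne_zero.2 (ne_of_mem_of_not_mem hw hz).symm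
  have hconst : (fun _ : ℝ ↦ ∮ z in C(c, r), (z - w)⁻¹ • f z) =ᶠ[atTop]
      fun R ↦ ∮ z in C(c, R), (z - w)⁻¹ • f z := by
    filter_upwards [eventually_ge_atTop r] with R hR
    refine (circleIntegral_eq_of_differentiable_on_annulus_off_countable hr hR countable_empty
      ((((continuousOn_id.sub continuousOn_const).inv₀ hne).smul hc).mono (sdiff_subset_compl _ _))
      fun z hz ↦ ?_).symm
    have hzr : z ∉ closedBall c r := hz.1.2
    exact ((differentiableAt_id.sub_const w).inv
      (hne z fun h ↦ hzr (ball_subset_closedBall h))).smul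
      (hd.differentiableAt_of_notMem_closedBall hzr)
  exact tendsto_nhds_unique (tendsto_const_nhds.congr' hconst)
    (tendsto_circleIntegral_sub_inv_smul_atTop hf c w)

theorem circleIntegral_sub_inv_smul_eq_neg_of_tendsto_cobounded [CompleteSpace E] (hr : 0 < r)
    (hw : w ∉ closedBall c r) (hc : ContinuousOn f (ball c r)ᶜ)
    (hd : DifferentiableOn ℂ f (closedBall c r)ᶜ) (hf : Tendsto f (cobounded ℂ) (𝓝 0)) :
    (∮ z in C(c, r), (z - w)⁻¹ • f z) = -((2 * π * I : ℂ) • f w) := by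
  have hconst : (fun _ : ℝ ↦ (∮ z in C(c, r), (z - w)⁻¹ • f z) + (2 * π * I : ℂ) • f w)
      =ᶠ[atTop] fun R ↦ ∮ z in C(c, R), (z - w)⁻¹ • f z := by
    filter_upwards [eventually_gt_atTop (dist w c)] with R hR
    rw [← circleIntegral_sub_inv_smul_sub_of_differentiable_on_annulus hr ⟨mem_ball.2 hR, hw⟩
      (hc.mono (sdiff_subset_compl _ _)) fun z hz ↦ hd.differentiableAt_of_notMem_closedBall hz.2,
      add_sub_cancel]
  exact eq_neg_of_add_eq_zero_left <| tendsto_nhds_unique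
    (tendsto_const_nhds.congr' hconst) (tendsto_circleIntegral_sub_inv_smul_atTop hf c w)

end Exterior

theorem circleIntegral_mul_div_sq_sub_sq {f : ℂ → ℂ} {z : ℂ} {r : ℝ} (hr : 0 ≤ r) (hz : ‖z‖ ≠ r)
    (hf : ContinuousOn f (sphere 0 r)) :
    (∮ ξ in C(0, r), ξ * f ξ / (ξ ^ 2 - z ^ 2)) =
      2⁻¹ * ((∮ ξ in C(0, r), (ξ - z)⁻¹ • f ξ) + ∮ ξ in C(0, r), (ξ - -z)⁻¹ • f ξ) := by
  have hz₁ : z ∉ sphere 0 r := by simpa using hz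
  have hz₂ : -z ∉ sphere 0 r := by simpa using hz
  rw [← circleIntegral.integral_add (circleIntegrable_sub_inv_smul hr hz₁ hf)
    (circleIntegrable_sub_inv_smul hr hz₂ hf), ← circleIntegral.integral_const_mul]
  refine circleIntegral.integral_congr hr fun ξ hξ ↦ ?_
  have h₁ : ξ - z ≠ 0 := sub_ne_zero.2 (ne_of_mem_of_not_mem hξ hz₁)
  have h₂ : ξ + z ≠ 0 := by simpa using sub_ne_zero.2 (ne_of_mem_of_not_mem hξ hz₂)
  rw [sub_neg_eq_add, smul_eq_mul, smul_eq_mul, sq_sub_sq]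
  field_simp
  ring

theorem exterior_dispersion_integral (h : ℂ → ℂ)
    (hcont : ContinuousOn h {z : ℂ | 1 ≤ ‖z‖})
    (hholo : DifferentiableOn ℂ h {z : ℂ | 1 < ‖z‖})
    (heven : ∀ z : ℂ, 1 ≤ ‖z‖ → h (-z) = h z)
    (hlim : Filter.Tendsto h (Filter.comap (fun z : ℂ => ‖z‖) Filter.atTop)
      (nhds 0)) :
    (∀ z : ℂ, 1 < ‖z‖ →
      (1 / (2 * Real.pi * Complex.I)) * (∮ ξ in C(0, 1), ξ * h ξ / (ξ^2 - z^2))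
        = -h z) ∧
    (∀ z : ℂ, ‖z‖ < 1 →
      (1 / (2 * Real.pi * Complex.I)) * (∮ ξ in C(0, 1), ξ * h ξ / (ξ^2 - z^2))
        = 0) := by
  rw [show {z : ℂ | 1 ≤ ‖z‖} = (ball 0 1)ᶜ by ext; simp] at hcont
  rw [show {z : ℂ | 1 < ‖z‖} = (closedBall 0 1)ᶜ by ext; simp] at hholo
  rw [comap_norm_atTop] at hlim
  have hsphere : ContinuousOn h (sphere 0 1) := hcont.mono fun ξ hξ ↦ by simp_all
  constructor
  · intro z hz
    have hz₁ : z ∉ closedBall 0 1 := by simpa using hz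
    have hz₂ : -z ∉ closedBall 0 1 := by simpa using hz
    rw [circleIntegral_mul_div_sq_sub_sq zero_le_one hz.ne' hsphere,
      circleIntegral_sub_inv_smul_eq_neg_of_tendsto_cobounded one_pos hz₁ hcont hholo hlim,
      circleIntegral_sub_inv_smul_eq_neg_of_tendsto_cobounded one_pos hz₂ hcont hholo hlim,
      heven z hz.le, smul_eq_mul]
    field_simp
    ring
  · intro z hz
    have hz₁ : z ∈ ball 0 1 := by simpa using hz
    have hz₂ : -z ∈ ball 0 1 := by simpa using hz
    rw [circleIntegral_mul_div_sq_sub_sq zero_le_one hz.ne hsphere,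
      circleIntegral_sub_inv_smul_eq_zero_of_tendsto_cobounded one_pos hz₁ hcont hholo hlim,
      circleIntegral_sub_inv_smul_eq_zero_of_tendsto_cobounded one_pos hz₂ hcont hholo hlim]
    simp
end

section
/- Let A be a commutative ring that is also an algebra over ℂ, and let b : A → A → A satisfy the Leibniz rule in its first argument: b(x·y, w) = x·b(y, w) + y·b(x, w) for all x, y, w ∈ A. Suppose z ∈ A is invertible, γ ∈ A, b(z, γ) = (i/2)·z·γ, and b(z⁻¹, γ) = 0. Then γ = 0. (Consequently, the time shifted nonlocal reduction of the Ablowitz–Ladik system, which forces z̃_j = 1/z_j and hence {z̃_j, γ_j} = 0, is incompatible with the Poisson bracket relation {z_j, γ_j} = (i/2)·z_j·γ_j of the scattering data whenever the discrete spectrum is nonempty, i.e. γ_j ≠ 0.) -/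
/-! From `b (z * z⁻¹) γ = b 1 γ = 0` the Leibniz rule gives `z * b z⁻¹ γ + z⁻¹ * b z γ = 0`;
with `b z⁻¹ γ = 0` and `b z γ = (i/2) • z γ` this reads `(i/2) • γ = 0`, so `γ = 0`. -/

def IsLeibnizLeft {A : Type*} [Mul A] [Add A] (b : A → A → A) : Prop :=
  ∀ x y w : A, b (x * y) w = x * b y w + y * b x w

namespace IsLeibnizLeft

variable {A : Type*} [NonAssocRing A] {b : A → A → A}

theorem apply_one (hb : IsLeibnizLeft b) (w : A) : b 1 w = 0 := by
  have h := hb 1 1 w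
  rw [one_mul, one_mul] at h
  simpa using h

theorem apply_of_mul_eq_one (hb : IsLeibnizLeft b) {z zinv : A} (h : z * zinv = 1) (w : A) :
    z * b zinv w + zinv * b z w = 0 := by
  rw [← hb, h, hb.apply_one]

end IsLeibnizLeft

theorem time_shifted_reduction_incompatible
    (A : Type*) [CommRing A] [Algebra ℂ A]
    (b : A → A → A)
    (hLeib : ∀ x y w : A, b (x * y) w = x * b y w + y * b x w)
    (z zinv γ : A) (hzinv : z * zinv = 1)
    (h1 : b z γ = (Complex.I / 2) • (z * γ))
    (h2 : b zinv γ = 0) :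
    γ = 0 := by
  have h := IsLeibnizLeft.apply_of_mul_eq_one hLeib hzinv γ
  rw [h1, h2, mul_zero, zero_add, mul_smul_comm, ← mul_assoc, mul_comm zinv, hzinv, one_mul] at h
  exact (smul_eq_zero.mp h).resolve_left (by simp [Complex.I_ne_zero])
end
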